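/- Let V be a complex inner product space, D : V → V a positive invertible self-adjoint linear map commuting with the linear map A : V → V, where A is self-adjoint for the inner product (⟨A x, y⟩ = ⟨x, A y⟩) and satisfies ‖A c‖ ≤ K ‖D c‖ for all c ∈ V and some K ≥ 0. If T, S : V → V are formal adjoints of each other with T∘S + S∘T = A, then ‖T c‖ ≤ √K · ‖D^{1/2} c‖ for all c ∈ V, where D^{1/2} denotes a positive square root of D commuting with A. -/
import Mathlib


open scoped ComplexInnerProductSpace

/-- Abstract energy-bound estimate: if `T` and `S` are formal adjoints of each
other with anticommutator `A`, `A` is self-adjoint, commutes with a positive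
invertible self-adjoint operator `D` and satisfies `‖A c‖ ≤ K ‖D c‖`, then
`‖T c‖ ≤ √K ‖D^{1/2} c‖`, where `R = D^{1/2}` is a given positive self-adjoint
square root of `D` commuting with `A`. -/
theorem stmt1 {V : Type*} [NormedAddCommGroup V] [InnerProductSpace ℂ V]
    (T S A D R : V →ₗ[ℂ] V) (K : ℝ) (hK : 0 ≤ K)
    -- D is self-adjoint, positive and invertible, and commutes with A
    (hDsa : ∀ x y : V, ⟪D x, y⟫ = ⟪x, D y⟫)
    (hDpos : ∀ x : V, 0 ≤ (⟪x, D x⟫).re)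
    (hDinv : Function.Bijective D)
    (hDA : D ∘ₗ A = A ∘ₗ D)
    -- A is self-adjoint and bounded by D
    (hAsa : ∀ x y : V, ⟪A x, y⟫ = ⟪x, A y⟫)
    (hbound : ∀ c : V, ‖A c‖ ≤ K * ‖D c‖)
    -- T and S are formal adjoints of each other with anticommutator A
    (hadj : ∀ x y : V, ⟪T x, y⟫ = ⟪x, S y⟫)
    (hA : T ∘ₗ S + S ∘ₗ T = A)
    -- R is a positive self-adjoint square root of D commuting with A
    (hR : R ∘ₗ R = D)
    (hRsa : ∀ x y : V, ⟪R x, y⟫ = ⟪x, R y⟫)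
    (hRpos : ∀ x : V, 0 ≤ (⟪x, R x⟫).re)
    (hRA : R ∘ₗ A = A ∘ₗ R) :
    ∀ c : V, ‖T c‖ ≤ Real.sqrt K * ‖R c‖ := by
  intro c
  set eD : V ≃ₗ[ℂ] V := LinearEquiv.ofBijective D hDinv with heD
  have heDap : ∀ y : V, D (eD.symm y) = y := fun y => eD.apply_symm_apply y
  have hRinj : Function.Injective R := by
    intro x y h
    apply hDinv.1
    have : (R ∘ₗ R) x = (R ∘ₗ R) y := by simp [LinearMap.comp_apply, h]
    rwa [hR] at this
  -- commutation of A with D⁻¹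
  have hcommD : ∀ y : V, eD.symm (A y) = A (eD.symm y) := by
    intro y
    apply hDinv.1
    rw [heDap]
    have := congrArg (fun f : V →ₗ[ℂ] V => f (eD.symm y)) hDA
    simp only [LinearMap.comp_apply] at this
    rw [this, heDap]
  -- the bounded operator D⁻¹ A
  have hDinvA : ∀ y : V, ‖eD.symm (A y)‖ ≤ K * ‖y‖ := by
    intro y
    rw [hcommD]
    have h1 := hbound (eD.symm y)
    rwa [heDap] at h1
  -- key identity : R (D⁻¹ A (R c)) = A c
  have hkey : R (eD.symm (A (R c))) = A c := by
    apply hRinj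
    have h1 : R (R (eD.symm (A (R c)))) = D (eD.symm (A (R c))) := by
      have := congrArg (fun f : V →ₗ[ℂ] V => f (eD.symm (A (R c)))) hR
      simpa [LinearMap.comp_apply] using this
    have h2 : R (A c) = A (R c) := by
      have := congrArg (fun f : V →ₗ[ℂ] V => f c) hRA
      simpa [LinearMap.comp_apply] using this
    rw [h1, heDap, h2]
  -- ⟪c, A c⟫ = ⟪R c, D⁻¹ A (R c)⟫
  have hform : ⟪c, A c⟫ = ⟪R c, eD.symm (A (R c))⟫ := by
    rw [← hkey, ← hRsa]
  -- Re ⟪c, A c⟫ ≤ K ‖R c‖²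
  have hupper : (⟪c, A c⟫).re ≤ K * ‖R c‖ ^ 2 := by
    rw [hform]
    calc (⟪R c, eD.symm (A (R c))⟫).re ≤ ‖R c‖ * ‖eD.symm (A (R c))‖ := by
          simpa using re_inner_le_norm (𝕜 := ℂ) (R c) (eD.symm (A (R c)))
      _ ≤ ‖R c‖ * (K * ‖R c‖) := by
          exact mul_le_mul_of_nonneg_left (hDinvA (R c)) (norm_nonneg _)
      _ = K * ‖R c‖ ^ 2 := by ring
  -- ‖T c‖² ≤ Re ⟪c, A c⟫
  have hlower : ‖T c‖ ^ 2 ≤ (⟪c, A c⟫).re := by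
    have hAc : A c = T (S c) + S (T c) := by
      have := congrArg (fun f : V →ₗ[ℂ] V => f c) hA
      simpa [LinearMap.comp_apply, LinearMap.add_apply] using this.symm
    have h1 : ⟪c, S (T c)⟫ = ⟪T c, T c⟫ := (hadj c (T c)).symm
    have h2 : ⟪c, T (S c)⟫ = ⟪S c, S c⟫ := by
      have := hadj (S c) c
      calc ⟪c, T (S c)⟫ = starRingEnd ℂ ⟪T (S c), c⟫ := (inner_conj_symm _ _).symm
        _ = starRingEnd ℂ ⟪S c, S c⟫ := by rw [this]
        _ = ⟪S c, S c⟫ := inner_conj_symm _ _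
    rw [hAc, inner_add_right, h1, h2]
    have e1 : (⟪S c, S c⟫).re = ‖S c‖ ^ 2 := by
      simpa using inner_self_eq_norm_sq (𝕜 := ℂ) (S c)
    have e2 : (⟪T c, T c⟫).re = ‖T c‖ ^ 2 := by
      simpa using inner_self_eq_norm_sq (𝕜 := ℂ) (T c)
    simp only [Complex.add_re, e1, e2]
    nlinarith [sq_nonneg ‖S c‖]
  have hsq : ‖T c‖ ^ 2 ≤ K * ‖R c‖ ^ 2 := hlower.trans hupper
  calc ‖T c‖ = Real.sqrt (‖T c‖ ^ 2) := (Real.sqrt_sq (norm_nonneg _)).symm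
    _ ≤ Real.sqrt (K * ‖R c‖ ^ 2) := Real.sqrt_le_sqrt hsq
    _ = Real.sqrt K * ‖R c‖ := by
        rw [Real.sqrt_mul hK, Real.sqrt_sq (norm_nonneg _)]
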